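/- arXiv:0912.0668 — 2 statements merged into one kernel-verified Lean document; each statement's English description precedes it below -/
import Mathlib

section
/- Thompson's group F, presented as ⟨x₀, x₁ | [x₀x₁⁻¹, x₁^{x₀}] = [x₀x₁⁻¹, x₁^{x₀²}] = 1⟩, has no proper non-abelian quotients: every normal subgroup N of F with F/N non-abelian is trivial. Equivalently, every non-injective group homomorphism from F to any group has abelian image. -/
open scoped commutatorElement
/-- The relators of the standard finite presentation
`F ≅ ⟨x₀, x₁ | [x₀x₁⁻¹, x₁^{x₀}] = [x₀x₁⁻¹, x₁^{x₀²}] = 1⟩` of Thompson's group `F`,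
written out with the paper's word-order (right-action) convention translated into
Mathlib's multiplication: the word `x₀x₁⁻¹` is `x₁⁻¹ * x₀` and `x₁^{x₀} = x₀⁻¹x₁x₀`
is `x₀ * x₁ * x₀⁻¹`. -/
def thompsonRels : Set (FreeGroup (Fin 2)) :=
  { ⁅(FreeGroup.of (1 : Fin 2))⁻¹ * FreeGroup.of (0 : Fin 2),
      FreeGroup.of (0 : Fin 2) * FreeGroup.of (1 : Fin 2) * (FreeGroup.of (0 : Fin 2))⁻¹⁆,
    ⁅(FreeGroup.of (1 : Fin 2))⁻¹ * FreeGroup.of (0 : Fin 2),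
      FreeGroup.of (0 : Fin 2) ^ 2 * FreeGroup.of (1 : Fin 2) *
        (FreeGroup.of (0 : Fin 2) ^ 2)⁻¹⁆ }

/-- Thompson's group `F`, given by its standard finite presentation. -/
abbrev ThompsonF : Type := PresentedGroup thompsonRels

/-!
`F` acts faithfully on Cantor space `{0,1}^ℕ`: `x₀` acts by the tree rotation
`00t ↦ 0t, 01t ↦ 10t, 1t ↦ 11t`, and `xₙ₊₁` acts as `xₙ` on the cylinder `1t`, fixing `0t`.
Faithfulness comes from the normal form: every element is `u⁻¹v` with `u, v` nonincreasing
positive words in the generators `xᵢ`, and such a word is read off from its action on the points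
`1ᵏ01^ω`.

Now let `φ` kill some `n ≠ 1`. The action of `n` is continuous, so `n` moves some cylinder
entirely off itself, and some conjugate of `n` moves the cylinder `C` of the points `10t` off
itself.
For `g, h` supported in `C`, `ngn⁻¹` is supported off `C`, hence commutes with `h`, so
`φ⁅g, h⁆ = φ⁅ngn⁻¹, h⁆ = 1`. One such commutator is conjugate in `F` to `⁅x₀, x₁⁆`, so `φ x₀` and
`φ x₁` commute and the image of `φ` is abelian.
-/

open Equiv Stream'

theorem conj_eq_conj_iff_commute {G : Type*} [Group G] {a b z : G} :
    b * z * b⁻¹ = a * z * a⁻¹ ↔ Commute (b⁻¹ * a) z := by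
  constructor <;> intro h
  · calc b⁻¹ * a * z = b⁻¹ * (a * z * a⁻¹) * a := by group
      _ = z * (b⁻¹ * a) := by rw [← h]; group
  · calc b * z * b⁻¹ = b * (z * (b⁻¹ * a)) * a⁻¹ := by group
      _ = a * z * a⁻¹ := by rw [← h.eq]; group

theorem map_commutatorElement_eq_one_of_commute {G H : Type*} [Group G] [Group H] (φ : G →* H)
    {n g h : G} (hn : φ n = 1) (hc : Commute (n * g * n⁻¹) h) : φ ⁅g, h⁆ = 1 := by
  have hg : φ (n * g * n⁻¹) = φ g := by simp [hn]
  rw [map_commutatorElement, ← hg, ← map_commutatorElement,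
    commutatorElement_eq_one_iff_commute.2 hc, map_one]

namespace ThompsonF

/-! ### The infinite presentation and normal forms -/

def x : ℕ → ThompsonF
  | 0 => PresentedGroup.of 0
  | 1 => PresentedGroup.of 1
  | n + 2 => PresentedGroup.of 0 * x (n + 1) * (PresentedGroup.of 0)⁻¹

theorem x_succ {n : ℕ} (hn : 1 ≤ n) : x (n + 1) = x 0 * x n * (x 0)⁻¹ := by
  obtain ⟨m, rfl⟩ := Nat.exists_eq_add_of_le' hn
  rfl

theorem commute_x_two : Commute ((x 1)⁻¹ * x 0) (x 2) := by
  have h := PresentedGroup.one_of_mem (rels := thompsonRels) (Set.mem_insert _ _)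
  rw [map_commutatorElement, commutatorElement_eq_one_iff_commute] at h
  exact h

theorem commute_x_three : Commute ((x 1)⁻¹ * x 0) (x 3) := by
  have h := PresentedGroup.one_of_mem (rels := thompsonRels) (Set.mem_insert_of_mem _ rfl)
  rw [map_commutatorElement, commutatorElement_eq_one_iff_commute] at h
  have e : x 3 = x 0 ^ 2 * x 1 * (x 0 ^ 2)⁻¹ := by
    simp only [x, pow_two]; group
  rw [e]
  exact h

theorem commute_x_of_two_le {i : ℕ} (hi : 2 ≤ i) : Commute ((x 1)⁻¹ * x 0) (x i) := by
  suffices h : ∀ k, Commute ((x 1)⁻¹ * x 0) (x (k + 2)) ∧ Commute ((x 1)⁻¹ * x 0) (x (k + 3)) by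
    obtain ⟨k, rfl⟩ := Nat.exists_eq_add_of_le' hi
    exact (h k).1
  intro k
  induction k with
  | zero => exact ⟨commute_x_two, commute_x_three⟩
  | succ k ih =>
    refine ⟨ih.2, ?_⟩
    have h1 : x 1 * x (k + 2) * (x 1)⁻¹ = x (k + 3) :=
      (conj_eq_conj_iff_commute.mpr ih.1).trans (x_succ (by omega)).symm
    have h2 : x 2 * x (k + 3) * (x 2)⁻¹ = x (k + 3 + 1) := by
      calc x 2 * x (k + 3) * (x 2)⁻¹ = x 0 * (x 1 * x (k + 2) * (x 1)⁻¹) * (x 0)⁻¹ := by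
            rw [x_succ (n := k + 2) (by omega), x_succ (n := 1) le_rfl]; group
        _ = x (k + 3 + 1) := by rw [h1]; exact (x_succ (by omega)).symm
    rw [← h2]
    exact (commute_x_two.mul_right ih.2).mul_right commute_x_two.inv_right

theorem x_conj : ∀ {j i : ℕ}, j < i → x j * x i * (x j)⁻¹ = x (i + 1)
  | 0, _, h => (x_succ h).symm
  | 1, _, h => (conj_eq_conj_iff_commute.mpr (commute_x_of_two_le h)).trans (x_succ (by omega)).symm
  | j + 2, i + 1, h => by
    have ih : x (j + 1) * x i * (x (j + 1))⁻¹ = x (i + 1) := x_conj (by omega)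
    calc x (j + 2) * x (i + 1) * (x (j + 2))⁻¹
        = x 0 * (x (j + 1) * x i * (x (j + 1))⁻¹) * (x 0)⁻¹ := by
          rw [x_succ (n := j + 1) (by omega), x_succ (n := i) (by omega)]; group
      _ = x (i + 1 + 1) := by rw [ih]; exact (x_succ (by omega)).symm

theorem x_mul_x_of_lt {j i : ℕ} (h : j < i) : x j * x i = x (i + 1) * x j := by
  rw [← x_conj h]; group

theorem x_mul_x_inv_of_lt {i k : ℕ} (h : i < k) : x i * (x k)⁻¹ = (x (k + 1))⁻¹ * x i := by
  rw [← x_conj h]; group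

theorem x_mul_x_inv_of_gt {i k : ℕ} (h : k < i) : x i * (x k)⁻¹ = (x k)⁻¹ * x (i + 1) := by
  rw [← x_conj h]; group

def xProd (l : List ℕ) : ThompsonF := (l.map x).prod

@[simp] theorem xProd_nil : xProd [] = 1 := rfl

@[simp] theorem xProd_cons (i : ℕ) (l : List ℕ) : xProd (i :: l) = x i * xProd l := by
  simp [xProd]

@[simp] theorem xProd_append (l l' : List ℕ) : xProd (l ++ l') = xProd l * xProd l' := by
  simp [xProd]

theorem exists_x_mul_inv_xProd (i : ℕ) (u : List ℕ) :
    ∃ u' v', x i * (xProd u)⁻¹ = (xProd u')⁻¹ * xProd v' := by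
  induction u using List.reverseRecOn generalizing i with
  | nil => exact ⟨[], [i], by simp⟩
  | append_singleton u k ih =>
    simp only [xProd_append, xProd_cons, xProd_nil, mul_one, mul_inv_rev, ← mul_assoc]
    rcases lt_trichotomy i k with h | rfl | h
    · obtain ⟨u', v', e⟩ := ih i
      refine ⟨u' ++ [k + 1], v', ?_⟩
      rw [x_mul_x_inv_of_lt h, mul_assoc, e]
      simp [mul_assoc]
    · exact ⟨u, [], by simp⟩
    · obtain ⟨u', v', e⟩ := ih (i + 1)
      refine ⟨u' ++ [k], v', ?_⟩
      rw [x_mul_x_inv_of_gt h, mul_assoc, e]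
      simp [mul_assoc]

theorem of_eq_x (i : Fin 2) : PresentedGroup.of i = x i := by
  fin_cases i <;> rfl

theorem exists_eq_xProd_inv_mul_xProd (g : ThompsonF) :
    ∃ u v, g = (xProd u)⁻¹ * xProd v := by
  have hg : g ∈ Subgroup.closure (Set.range PresentedGroup.of) := by simp
  induction hg using Subgroup.closure_induction_left with
  | one => exact ⟨[], [], by simp⟩
  | mul_left y hy g _ ih =>
    obtain ⟨i, rfl⟩ := hy
    obtain ⟨u, v, rfl⟩ := ih
    obtain ⟨u', v', e⟩ := exists_x_mul_inv_xProd i u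
    refine ⟨u', v' ++ v, ?_⟩
    rw [of_eq_x, ← mul_assoc, e, xProd_append, mul_assoc]
  | inv_mul_cancel y hy g _ ih =>
    obtain ⟨i, rfl⟩ := hy
    obtain ⟨u, v, rfl⟩ := ih
    refine ⟨u ++ [(i : ℕ)], v, ?_⟩
    simp [of_eq_x, mul_assoc]

theorem exists_sorted_xProd_eq_x_mul {v : List ℕ} (hv : v.Pairwise (· ≥ ·)) {j B : ℕ}
    (hj : j ≤ B) (hvB : ∀ k ∈ v, k ≤ B) :
    ∃ v', v'.Pairwise (· ≥ ·) ∧ (∀ k ∈ v', k ≤ B + 1) ∧ xProd v' = x j * xProd v := by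
  induction v generalizing B with
  | nil => exact ⟨[j], by simp, by simp; omega, by simp⟩
  | cons i t ih =>
    rw [List.pairwise_cons] at hv
    by_cases hji : j < i
    · obtain ⟨t', ht', ht'B, e⟩ := ih hv.2 hji.le hv.1
      have hiB : i ≤ B := hvB i List.mem_cons_self
      refine ⟨(i + 1) :: t', List.pairwise_cons.2 ⟨ht'B, ht'⟩, ?_, ?_⟩
      · intro k hk
        rcases List.mem_cons.1 hk with rfl | hk
        · omega
        · exact (ht'B k hk).trans (by omega)
      · rw [xProd_cons, e, xProd_cons, ← mul_assoc, ← mul_assoc, x_mul_x_of_lt hji]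
    · refine ⟨j :: i :: t, List.pairwise_cons.2 ⟨?_, List.pairwise_cons.2 hv⟩, ?_, rfl⟩
      · intro k hk
        rcases List.mem_cons.1 hk with rfl | hk
        · exact not_lt.1 hji
        · exact (hv.1 k hk).trans (not_lt.1 hji)
      · intro k hk
        rcases List.mem_cons.1 hk with rfl | hk
        · exact hj.trans B.le_succ
        · exact (hvB k hk).trans B.le_succ

theorem exists_sorted_xProd_eq (u : List ℕ) :
    ∃ v, v.Pairwise (· ≥ ·) ∧ xProd v = xProd u := by
  induction u with
  | nil => exact ⟨[], List.Pairwise.nil, rfl⟩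
  | cons j t ih =>
    obtain ⟨v, hv, e⟩ := ih
    obtain ⟨v', hv', -, e'⟩ := exists_sorted_xProd_eq_x_mul hv (j := j) (B := j + v.sum)
      (Nat.le_add_right _ _) fun k hk => (List.le_sum_of_mem hk).trans (Nat.le_add_left _ _)
    exact ⟨v', hv', by rw [e', e, xProd_cons]⟩

theorem range_eq_closure {G : Type*} [Group G] (φ : ThompsonF →* G) :
    φ.range = Subgroup.closure {φ (x 0), φ (x 1)} := by
  rw [MonoidHom.range_eq_map, ← PresentedGroup.closure_range_of, MonoidHom.map_closure,
    ← Set.range_comp]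
  congr 1
  ext σ
  simp [Fin.exists_fin_two, of_eq_x, eq_comm]

theorem commute_apply_of_commute_x {G : Type*} [Group G] (φ : ThompsonF →* G)
    (h : Commute (φ (x 0)) (φ (x 1))) (g g' : ThompsonF) : Commute (φ g) (φ g') := by
  have hcomm := Subgroup.isMulCommutative_closure (k := {φ (x 0), φ (x 1)}) <| by
    rintro _ (rfl | rfl) _ (rfl | rfl)
    exacts [rfl, h.eq, h.eq.symm, rfl]
  have hg : ∀ g, φ g ∈ Subgroup.closure {φ (x 0), φ (x 1)} := fun g => range_eq_closure φ ▸ ⟨g, rfl⟩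
  exact congrArg Subtype.val (hcomm.is_comm.comm ⟨_, hg g⟩ ⟨_, hg g'⟩)

/-! ### Permutations of streams acting on cylinders -/

section Cylinders

variable {α β γ : Type*}

theorem exists_eq_cons_cons (s : Stream' α) : ∃ (a b : α) (t : Stream' α), s = a :: b :: t :=
  ⟨s.head, s.tail.head, s.tail.tail, by rw [Stream'.eta, Stream'.eta]⟩

theorem take_length_eq_iff {w : List α} {z : Stream' α} :
    z.take w.length = w ↔ ∃ s, z = w ++ₛ s := by
  constructor
  · intro h
    refine ⟨z.drop w.length, ?_⟩
    conv_lhs => rw [← append_take_drop w.length z, h]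
  · rintro ⟨s, rfl⟩
    simpa using (append_take 0 w s).symm

theorem eq_append_or_forall_ne (w : List α) (z : Stream' α) :
    (∃ s, z = w ++ₛ s) ∨ ∀ s, z ≠ w ++ₛ s := by
  by_cases h : ∃ s, z = w ++ₛ s
  · exact .inl h
  · exact .inr (by simpa using h)

theorem take_eq_take_of_le {s t : Stream' α} {m n : ℕ} (hmn : m ≤ n)
    (h : s.take n = t.take n) : s.take m = t.take m := by
  rw [← min_eq_right hmn, ← take_take, h, take_take]

theorem take_append_eq_take_append (w : List α) {s t : Stream' α} {n : ℕ}
    (h : s.take n = t.take n) : (w ++ₛ s).take n = (w ++ₛ t).take n :=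
  take_eq_take_of_le (Nat.le_add_left n w.length) (by rw [← append_take, ← append_take, h])

theorem take_cons_eq_take_cons (b : α) {s t : Stream' α} {n : ℕ} (h : s.take n = t.take n) :
    (b :: s).take n = (b :: t).take n :=
  take_append_eq_take_append [b] h

/-- Uniform continuity for the product topology, phrased with prefixes. -/
def PrefixContinuous (f : Stream' α → Stream' β) : Prop :=
  ∀ n, ∃ m, ∀ s t, s.take m = t.take m → (f s).take n = (f t).take n

theorem PrefixContinuous.comp {f : Stream' β → Stream' γ} {g : Stream' α → Stream' β}
    (hf : PrefixContinuous f) (hg : PrefixContinuous g) : PrefixContinuous (f ∘ g) := by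
  intro n
  obtain ⟨m, hm⟩ := hf n
  obtain ⟨k, hk⟩ := hg m
  exact ⟨k, fun s t h => hm _ _ (hk s t h)⟩

theorem exists_forall_apply_append_ne {σ : Perm (Stream' α)} (hσ : PrefixContinuous σ)
    (h1 : σ ≠ 1) : ∃ w : List α, ∀ s t, σ (w ++ₛ s) ≠ w ++ₛ t := by
  obtain ⟨z, hz⟩ : ∃ z, σ z ≠ z := by
    by_contra! h
    exact h1 (Equiv.ext h)
  obtain ⟨n, hn⟩ : ∃ n, (σ z).take n ≠ z.take n := by
    by_contra! h
    exact hz (take_theorem _ _ h)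
  obtain ⟨m, hm⟩ := hσ n
  have take_prefix : ∀ k s, k ≤ max m n → (z.take (max m n) ++ₛ s).take k = z.take k := by
    intro k s hk
    rw [take_append_of_le_length, take_take, min_eq_right hk]
    simpa using hk
  refine ⟨z.take (max m n), fun s t e => hn ?_⟩
  rw [← take_prefix n t (le_max_right _ _), ← e]
  exact (hm _ _ (take_prefix m s (le_max_left _ _))).symm

def prefixContinuousPerms : Subgroup (Perm (Stream' α)) where
  carrier := {σ | PrefixContinuous σ ∧ PrefixContinuous ⇑σ⁻¹}
  one_mem' := ⟨fun n => ⟨n, fun _ _ h => h⟩, fun n => ⟨n, fun _ _ h => h⟩⟩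
  mul_mem' := fun ⟨hσ, hσ'⟩ ⟨hτ, hτ'⟩ => ⟨hσ.comp hτ, by rw [mul_inv_rev]; exact hτ'.comp hσ'⟩
  inv_mem' := fun ⟨hσ, hσ'⟩ => ⟨hσ', by rwa [inv_inv]⟩

variable [DecidableEq α]

def appendEquiv (w : List α) : Stream' α ≃ {z : Stream' α // z.take w.length = w} where
  toFun s := ⟨w ++ₛ s, take_length_eq_iff.2 ⟨s, rfl⟩⟩
  invFun z := z.1.drop w.length
  left_inv s := drop_append_stream w s
  right_inv z := by
    obtain ⟨s, hs⟩ := take_length_eq_iff.1 z.2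
    exact Subtype.ext (by simp only [hs, drop_append_stream])

def copyAt (w : List α) : Perm (Stream' α) →* Perm (Stream' α) :=
  Perm.extendDomainHom (appendEquiv w)

@[simp] theorem copyAt_apply_append (w : List α) (p : Perm (Stream' α)) (s : Stream' α) :
    copyAt w p (w ++ₛ s) = w ++ₛ p s :=
  Perm.extendDomain_apply_image p (appendEquiv w) s

theorem copyAt_apply_of_forall_ne {w : List α} (p : Perm (Stream' α)) {z : Stream' α}
    (hz : ∀ s, z ≠ w ++ₛ s) : copyAt w p z = z :=
  Perm.extendDomain_apply_not_subtype p (appendEquiv w) fun h =>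
    (take_length_eq_iff.1 h).elim hz

@[simp] theorem copyAt_nil (p : Perm (Stream' α)) : copyAt [] p = p := by
  ext z : 1
  exact copyAt_apply_append [] p z

theorem copyAt_append (w w' : List α) (p : Perm (Stream' α)) :
    copyAt (w ++ w') p = copyAt w (copyAt w' p) := by
  ext z : 1
  rcases eq_append_or_forall_ne w z with ⟨s, rfl⟩ | hz
  · rw [copyAt_apply_append]
    rcases eq_append_or_forall_ne w' s with ⟨t, rfl⟩ | hs
    · rw [← append_append_stream, copyAt_apply_append, copyAt_apply_append, append_append_stream]
    · rw [copyAt_apply_of_forall_ne _ hs, copyAt_apply_of_forall_ne]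
      rintro t h
      exact hs t (by simpa using h)
  · rw [copyAt_apply_of_forall_ne _ hz, copyAt_apply_of_forall_ne]
    rintro s rfl
    exact hz _ (append_append_stream _ _ _)

@[simp] theorem copyAt_cons_apply_cons_self (b : α) (w : List α) (p : Perm (Stream' α))
    (s : Stream' α) : copyAt (b :: w) p (b :: s) = b :: copyAt w p s := by
  rw [← List.singleton_append, copyAt_append]
  exact copyAt_apply_append [b] _ s

@[simp] theorem copyAt_cons_apply_cons_of_ne {b c : α} (hcb : c ≠ b) (w : List α)
    (p : Perm (Stream' α)) (s : Stream' α) : copyAt (b :: w) p (c :: s) = c :: s := by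
  apply copyAt_apply_of_forall_ne
  intro t h
  exact hcb (by simpa using congrArg head h)

theorem conj_copyAt {σ π : Perm (Stream' α)} {w w' : List α}
    (h : ∀ s, π s ≠ s → σ (w ++ₛ s) = w' ++ₛ s) :
    σ * copyAt w π * σ⁻¹ = copyAt w' π := by
  have fix : ∀ y, (∀ t, π t ≠ t → y ≠ w ++ₛ t) → copyAt w' π (σ y) = σ y := by
    intro y hy
    rcases eq_append_or_forall_ne w' (σ y) with ⟨t, ht⟩ | hne
    · by_cases htt : π t = t
      · rw [ht, copyAt_apply_append, htt]
      · exact absurd (σ.injective (by rw [ht, h t htt])) (hy t htt)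
    · exact copyAt_apply_of_forall_ne π hne
  rw [mul_inv_eq_iff_eq_mul]
  ext z : 1
  simp only [Perm.mul_apply]
  rcases eq_append_or_forall_ne w z with ⟨s, rfl⟩ | hz
  · rw [copyAt_apply_append]
    by_cases hs : π s = s
    · rw [hs, fix]
      rintro t ht e
      exact ht (append_right_injective _ _ _ e ▸ hs)
    · rw [h s hs, copyAt_apply_append, h _ (fun e => hs (π.injective e))]
  · rw [copyAt_apply_of_forall_ne π hz, fix z (fun t _ => hz t)]

theorem commute_conj_copyAt {σ : Perm (Stream' α)} {w : List α}
    (hσ : ∀ s t, σ (w ++ₛ s) ≠ w ++ₛ t) (p q : Perm (Stream' α)) :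
    Commute (σ * copyAt w p * σ⁻¹) (copyAt w q) := by
  refine Perm.Disjoint.commute fun z => ?_
  rcases eq_append_or_forall_ne w z with ⟨t, rfl⟩ | hz
  · left
    have : ∀ s, σ.symm (w ++ₛ t) ≠ w ++ₛ s := fun s e => hσ s t (by rw [← e]; simp)
    simp [copyAt_apply_of_forall_ne p this]
  · exact .inr (copyAt_apply_of_forall_ne q hz)

theorem PrefixContinuous.copyAt {p : Perm (Stream' α)} (hp : PrefixContinuous p) (w : List α) :
    PrefixContinuous (copyAt w p) := by
  intro n
  obtain ⟨m, hm⟩ := hp n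
  refine ⟨max n (w.length + m), fun s t h => ?_⟩
  have hw : s.take w.length = t.take w.length := take_eq_take_of_le (by omega) h
  by_cases hs : s.take w.length = w
  · obtain ⟨s, rfl⟩ := take_length_eq_iff.1 hs
    obtain ⟨t, rfl⟩ := take_length_eq_iff.1 (hw ▸ hs)
    have hst : s.take m = t.take m := by
      have := take_eq_take_of_le (le_max_right _ _) h
      rwa [← append_take, ← append_take, List.append_cancel_left_eq] at this
    rw [copyAt_apply_append, copyAt_apply_append]
    exact take_append_eq_take_append w (hm s t hst)
  · rw [copyAt_apply_of_forall_ne p (fun s' e => hs (take_length_eq_iff.2 ⟨s', e⟩)),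
      copyAt_apply_of_forall_ne p (fun s' e => hs (hw ▸ take_length_eq_iff.2 ⟨s', e⟩))]
    exact take_eq_take_of_le (le_max_left _ _) h

end Cylinders

/-! ### The action of `F` on Cantor space -/

abbrev Cantor : Type := Stream' Bool

def rotate (s : Cantor) : Cantor :=
  match s.head, s.tail.head with
  | true, _ => true :: s
  | false, false => s.tail
  | false, true => true :: false :: s.tail.tail

def rotateInv (s : Cantor) : Cantor :=
  match s.head, s.tail.head with
  | false, _ => false :: s
  | true, true => s.tail
  | true, false => false :: true :: s.tail.tail

@[simp] theorem rotate_true (s : Cantor) : rotate (true :: s) = true :: true :: s := by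
  simp [rotate]
@[simp] theorem rotate_false_false (s : Cantor) : rotate (false :: false :: s) = false :: s := by
  simp [rotate]
@[simp] theorem rotate_false_true (s : Cantor) :
    rotate (false :: true :: s) = true :: false :: s := by
  simp [rotate]
@[simp] theorem rotateInv_false (s : Cantor) : rotateInv (false :: s) = false :: false :: s := by
  simp [rotateInv]
@[simp] theorem rotateInv_true_true (s : Cantor) : rotateInv (true :: true :: s) = true :: s := by
  simp [rotateInv]
@[simp] theorem rotateInv_true_false (s : Cantor) :
    rotateInv (true :: false :: s) = false :: true :: s := by
  simp [rotateInv]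

def rotation : Perm Cantor where
  toFun := rotate
  invFun := rotateInv
  left_inv s := by
    obtain ⟨a, b, t, rfl⟩ := exists_eq_cons_cons s
    cases a <;> cases b <;> simp
  right_inv s := by
    obtain ⟨a, b, t, rfl⟩ := exists_eq_cons_cons s
    cases a <;> cases b <;> simp

@[simp] theorem rotation_apply (s : Cantor) : rotation s = rotate s := rfl

@[simp] theorem rotation_symm_apply (s : Cantor) : rotation.symm s = rotateInv s := rfl

theorem prefixContinuous_rotate : PrefixContinuous rotate := by
  intro n
  refine ⟨n + 2, fun s t h => ?_⟩
  obtain ⟨a, b, s, rfl⟩ := exists_eq_cons_cons s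
  obtain ⟨a', b', t, rfl⟩ := exists_eq_cons_cons t
  simp only [take_succ_cons, List.cons.injEq] at h
  obtain ⟨rfl, rfl, h⟩ := h
  cases a <;> cases b <;> simp only [rotate_true, rotate_false_false, rotate_false_true] <;>
    (repeat apply take_cons_eq_take_cons) <;> exact h

theorem prefixContinuous_rotateInv : PrefixContinuous rotateInv := by
  intro n
  refine ⟨n + 2, fun s t h => ?_⟩
  obtain ⟨a, b, s, rfl⟩ := exists_eq_cons_cons s
  obtain ⟨a', b', t, rfl⟩ := exists_eq_cons_cons t
  simp only [take_succ_cons, List.cons.injEq] at h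
  obtain ⟨rfl, rfl, h⟩ := h
  cases a <;> cases b <;> simp only [rotateInv_false, rotateInv_true_true, rotateInv_true_false] <;>
    (repeat apply take_cons_eq_take_cons) <;> exact h

def xPerm (n : ℕ) : Perm Cantor := copyAt (List.replicate n true) rotation

theorem xPerm_zero : xPerm 0 = rotation := copyAt_nil _

theorem xPerm_succ (n : ℕ) : xPerm (n + 1) = copyAt [true] (xPerm n) := by
  rw [xPerm, xPerm, List.replicate_succ, ← List.singleton_append, copyAt_append]

theorem xPerm_add (j m : ℕ) : xPerm (j + m) = copyAt (List.replicate j true) (xPerm m) := by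
  rw [xPerm, xPerm, List.replicate_add, copyAt_append]

theorem xPerm_conj {j i : ℕ} (h : j < i) : xPerm j * xPerm i * (xPerm j)⁻¹ = xPerm (i + 1) := by
  obtain ⟨k, rfl⟩ := Nat.exists_eq_add_of_lt h
  have hrot : rotation * copyAt [true] (xPerm k) * rotation⁻¹ = copyAt [true, true] (xPerm k) :=
    conj_copyAt fun s _ => rotate_true s
  have hi : xPerm (j + k + 1) = copyAt (List.replicate j true) (copyAt [true] (xPerm k)) := by
    rw [add_assoc, xPerm_add, xPerm_succ]
  have hi' : xPerm (j + k + 1 + 1) =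
      copyAt (List.replicate j true) (copyAt [true, true] (xPerm k)) := by
    rw [show j + k + 1 + 1 = j + (k + 1 + 1) by ring, xPerm_add, xPerm_succ, xPerm_succ,
      ← copyAt_append [true] [true]]
    rfl
  rw [hi, hi', ← hrot, map_mul, map_mul, map_inv]
  rfl

@[simp] theorem xPerm_succ_apply_true (n : ℕ) (s : Cantor) :
    xPerm (n + 1) (true :: s) = true :: xPerm n s := by
  simp [xPerm_succ]

@[simp] theorem xPerm_succ_apply_false (n : ℕ) (s : Cantor) :
    xPerm (n + 1) (false :: s) = false :: s := by
  simp [xPerm_succ]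

@[simp] theorem xPerm_succ_symm_apply_true (n : ℕ) (s : Cantor) :
    (xPerm (n + 1)).symm (true :: s) = true :: (xPerm n).symm s := by
  rw [← Perm.coe_inv, ← Perm.coe_inv, xPerm_succ, ← map_inv]
  exact copyAt_cons_apply_cons_self _ _ _ _

@[simp] theorem xPerm_succ_symm_apply_false (n : ℕ) (s : Cantor) :
    (xPerm (n + 1)).symm (false :: s) = false :: s := by
  rw [← Perm.coe_inv, xPerm_succ, ← map_inv]
  exact copyAt_cons_apply_cons_of_ne Bool.false_ne_true _ _ _

theorem commute_xPerm_of_two_le {i : ℕ} (hi : 2 ≤ i) :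
    Commute ((xPerm 1)⁻¹ * xPerm 0) (xPerm i) :=
  conj_eq_conj_iff_commute.mp ((xPerm_conj (by omega)).trans (xPerm_conj (by omega)).symm)

def toPerm : ThompsonF →* Perm Cantor :=
  PresentedGroup.toGroup (f := ![xPerm 0, xPerm 1]) <| by
    rintro r (rfl | rfl) <;>
      simp only [map_commutatorElement, commutatorElement_eq_one_iff_commute, map_mul, map_inv,
        map_pow, FreeGroup.lift_apply_of, Matrix.cons_val_zero, Matrix.cons_val_one]
    · rw [xPerm_conj zero_lt_one]
      exact commute_xPerm_of_two_le le_rfl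
    · have h : xPerm 0 ^ 2 * xPerm 1 * (xPerm 0 ^ 2)⁻¹ = xPerm 3 := by
        calc xPerm 0 ^ 2 * xPerm 1 * (xPerm 0 ^ 2)⁻¹
            = xPerm 0 * (xPerm 0 * xPerm 1 * (xPerm 0)⁻¹) * (xPerm 0)⁻¹ := by rw [pow_two]; group
          _ = xPerm 3 := by rw [xPerm_conj zero_lt_one]; exact xPerm_conj zero_lt_two
      rw [h]
      exact commute_xPerm_of_two_le (by omega)

@[simp] theorem toPerm_x : ∀ n, toPerm (x n) = xPerm n
  | 0 => PresentedGroup.toGroup.of _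
  | 1 => PresentedGroup.toGroup.of _
  | n + 2 => by
    rw [x, map_mul, map_mul, map_inv, toPerm_x (n + 1)]
    exact xPerm_conj n.succ_pos

def probe (k : ℕ) : Cantor := List.replicate k true ++ₛ false :: const true

theorem probe_zero : probe 0 = false :: const true := rfl

theorem probe_succ (k : ℕ) : probe (k + 1) = true :: probe k := rfl

theorem probe_injective : Function.Injective probe := by
  intro k m h
  induction k generalizing m with
  | zero => cases m with
    | zero => rfl
    | succ m => simpa [probe_zero, probe_succ] using congrArg head h
  | succ k ih => cases m with
    | zero => simpa [probe_zero, probe_succ] using congrArg head h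
    | succ m => rw [ih (cons_injective_right _ h)]

theorem xPerm_probe_of_le {j k : ℕ} (h : j ≤ k) : xPerm j (probe k) = probe (k + 1) := by
  induction j generalizing k with
  | zero =>
    cases k with
    | zero =>
      rw [probe_succ, probe_zero, xPerm_zero, rotation_apply]
      conv_lhs => rw [const_eq]
      rfl
    | succ k => simp [xPerm_zero, probe_succ]
  | succ j ih =>
    cases k with
    | zero => omega
    | succ k => simp [probe_succ, ih (by omega : j ≤ k)]

theorem xPerm_probe_of_lt {j k : ℕ} (h : k < j) : xPerm j (probe k) = probe k := by
  induction k generalizing j with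
  | zero =>
    cases j with
    | zero => omega
    | succ j => simp [probe_zero]
  | succ k ih =>
    cases j with
    | zero => omega
    | succ j => simp [probe_succ, ih (by omega : k < j)]

theorem exists_toPerm_xProd_probe (u : List ℕ) (k : ℕ) :
    ∃ c, k ≤ c ∧ toPerm (xProd u) (probe k) = probe c := by
  induction u with
  | nil => exact ⟨k, le_rfl, rfl⟩
  | cons j t ih =>
    obtain ⟨c, hc, e⟩ := ih
    rw [xProd_cons, map_mul, Perm.mul_apply, e, toPerm_x]
    by_cases hjc : j ≤ c
    · exact ⟨c + 1, by omega, xPerm_probe_of_le hjc⟩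
    · exact ⟨c, hc, xPerm_probe_of_lt (by omega)⟩

theorem toPerm_xProd_probe_of_lt {u : List ℕ} {k : ℕ} (h : ∀ j ∈ u, k < j) :
    toPerm (xProd u) (probe k) = probe k := by
  induction u with
  | nil => rfl
  | cons j t ih =>
    rw [xProd_cons, map_mul, Perm.mul_apply, ih fun i hi => h i (by simp [hi]), toPerm_x,
      xPerm_probe_of_lt (h j (by simp))]

theorem toPerm_xProd_append_singleton_probe_ne (u : List ℕ) (m : ℕ) :
    toPerm (xProd (u ++ [m])) (probe m) ≠ probe m := by
  obtain ⟨c, hc, e⟩ := exists_toPerm_xProd_probe u (m + 1)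
  rw [xProd_append, map_mul, Perm.mul_apply, xProd_cons, xProd_nil, mul_one, toPerm_x,
    xPerm_probe_of_le le_rfl, e]
  exact fun h => by have := probe_injective h; omega

-- The last letter `m` of a nonincreasing word is the least `k` whose probe point it moves.
theorem eq_of_toPerm_xProd_eq {u v : List ℕ} (hu : u.Pairwise (· ≥ ·)) (hv : v.Pairwise (· ≥ ·))
    (h : toPerm (xProd u) = toPerm (xProd v)) : u = v := by
  induction u using List.reverseRecOn generalizing v with
  | nil =>
    rcases List.eq_nil_or_concat' v with rfl | ⟨v', m, rfl⟩
    · rfl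
    · exact absurd (by rw [← h]; rfl) (toPerm_xProd_append_singleton_probe_ne v' m)
  | append_singleton u' mu ih =>
    rcases List.eq_nil_or_concat' v with rfl | ⟨v', mv, rfl⟩
    · exact absurd (by rw [h]; rfl) (toPerm_xProd_append_singleton_probe_ne u' mu)
    have min_le : ∀ {w : List ℕ} {m : ℕ}, (w ++ [m]).Pairwise (· ≥ ·) → ∀ j ∈ w ++ [m], m ≤ j := by
      intro w m hw j hj
      rcases List.mem_append.1 hj with hj | hj
      · exact (List.pairwise_append.1 hw).2.2 j hj m (List.mem_singleton_self m)
      · exact (List.mem_singleton.1 hj).ge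
    have hm : mu = mv := by
      by_contra hne
      rcases Nat.lt_or_gt_of_ne hne with hlt | hlt
      · apply toPerm_xProd_append_singleton_probe_ne u' mu
        rw [h]
        exact toPerm_xProd_probe_of_lt fun j hj => hlt.trans_le (min_le hv j hj)
      · apply toPerm_xProd_append_singleton_probe_ne v' mv
        rw [← h]
        exact toPerm_xProd_probe_of_lt fun j hj => hlt.trans_le (min_le hu j hj)
    subst hm
    rw [ih (List.pairwise_append.1 hu).1 (List.pairwise_append.1 hv).1]
    simpa [xProd_append] using h

theorem toPerm_injective : Function.Injective toPerm := by
  rw [injective_iff_map_eq_one]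
  intro g hg
  obtain ⟨u, v, rfl⟩ := exists_eq_xProd_inv_mul_xProd g
  obtain ⟨u', hu', eu⟩ := exists_sorted_xProd_eq u
  obtain ⟨v', hv', ev⟩ := exists_sorted_xProd_eq v
  rw [← eu, ← ev, map_mul, map_inv, inv_mul_eq_one] at hg
  rw [← eu, ← ev, eq_of_toPerm_xProd_eq hu' hv' hg, inv_mul_cancel]

/-! ### The image of the action -/

theorem range_toPerm : toPerm.range = Subgroup.closure {xPerm 0, xPerm 1} := by
  rw [range_eq_closure, toPerm_x, toPerm_x]

theorem xPerm_mem_prefixContinuousPerms (n : ℕ) : xPerm n ∈ prefixContinuousPerms :=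
  ⟨prefixContinuous_rotate.copyAt _, by
    rw [xPerm, ← map_inv]; exact prefixContinuous_rotateInv.copyAt _⟩

theorem toPerm_mem_prefixContinuousPerms (g : ThompsonF) : toPerm g ∈ prefixContinuousPerms := by
  have : toPerm.range ≤ prefixContinuousPerms := by
    rw [range_toPerm, Subgroup.closure_le]
    rintro _ (rfl | rfl) <;> exact xPerm_mem_prefixContinuousPerms _
  exact this ⟨g, rfl⟩

theorem xPerm_mem_range (n : ℕ) : xPerm n ∈ toPerm.range := ⟨x n, toPerm_x n⟩

theorem apply_mem_range_of_generators {θ : Perm Cantor →* Perm Cantor}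
    (h0 : θ (xPerm 0) ∈ toPerm.range) (h1 : θ (xPerm 1) ∈ toPerm.range) {p : Perm Cantor}
    (hp : p ∈ toPerm.range) : θ p ∈ toPerm.range := by
  rw [range_toPerm] at h0 h1 hp ⊢
  have : Subgroup.closure {xPerm 0, xPerm 1} ≤ (Subgroup.closure {xPerm 0, xPerm 1}).comap θ := by
    rw [Subgroup.closure_le]
    rintro _ (rfl | rfl)
    exacts [h0, h1]
  exact this hp

theorem copyAt_true_mem_range {p : Perm Cantor} (hp : p ∈ toPerm.range) :
    copyAt [true] p ∈ toPerm.range :=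
  apply_mem_range_of_generators (by rw [← xPerm_succ]; exact xPerm_mem_range 1)
    (by rw [← xPerm_succ]; exact xPerm_mem_range 2) hp

theorem copyAt_false_xPerm_zero :
    copyAt [false] (xPerm 0) = (xPerm 0)⁻¹ * (xPerm 1)⁻¹ * xPerm 0 * xPerm 0 := by
  ext z : 1
  obtain ⟨a, b, z, rfl⟩ := exists_eq_cons_cons z
  obtain ⟨c, d, z, rfl⟩ := exists_eq_cons_cons z
  cases a <;> cases b <;> cases c <;> simp [xPerm_zero]

theorem copyAt_false_mem_range {p : Perm Cantor} (hp : p ∈ toPerm.range) :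
    copyAt [false] p ∈ toPerm.range := by
  have h0 : copyAt [false] (xPerm 0) ∈ toPerm.range := by
    rw [copyAt_false_xPerm_zero]
    exact mul_mem (mul_mem (mul_mem (inv_mem (xPerm_mem_range 0)) (inv_mem (xPerm_mem_range 1)))
      (xPerm_mem_range 0)) (xPerm_mem_range 0)
  have h1 : copyAt [false] (xPerm 1) =
      (xPerm 0)⁻¹ * copyAt [true] (copyAt [false] (xPerm 0)) * xPerm 0 := by
    have h : xPerm 0 * copyAt [false, true] (xPerm 0) * (xPerm 0)⁻¹ =
        copyAt [true, false] (xPerm 0) :=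
      conj_copyAt fun s _ => rotate_false_true s
    rw [xPerm_succ, ← copyAt_append [false] [true], ← copyAt_append [true] [false]]
    rw [List.singleton_append, List.singleton_append, ← h]
    group
  refine apply_mem_range_of_generators h0 ?_ hp
  rw [h1]
  exact mul_mem (mul_mem (inv_mem (xPerm_mem_range 0)) (copyAt_true_mem_range h0))
    (xPerm_mem_range 0)

theorem copyAt_mem_range (w : List Bool) {p : Perm Cantor} (hp : p ∈ toPerm.range) :
    copyAt w p ∈ toPerm.range := by
  induction w with
  | nil => rwa [copyAt_nil]
  | cons b w ih =>
    rw [← List.singleton_append, copyAt_append]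
    cases b
    · exact copyAt_false_mem_range ih
    · exact copyAt_true_mem_range ih

theorem exists_mem_range_maps_into_cylinder (β : List Bool) :
    ∃ σ ∈ toPerm.range, ∀ s, ∃ t, σ ([true, false] ++ₛ s) = β ++ₛ t := by
  induction β with
  | nil => exact ⟨1, one_mem _, fun s => ⟨_, rfl⟩⟩
  | cons b β ih =>
    obtain ⟨σ, hσ, hσβ⟩ := ih
    cases b
    -- `x₀⁻²` takes `10s` to `001s`, which the copy of `x₀` at `0` takes to `010s`.
    · refine ⟨copyAt [false] σ * (copyAt [false] (xPerm 0) * (xPerm 0)⁻¹ * (xPerm 0)⁻¹),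
        mul_mem (copyAt_mem_range _ hσ) (mul_mem (mul_mem (copyAt_mem_range _ (xPerm_mem_range 0))
          (inv_mem (xPerm_mem_range 0))) (inv_mem (xPerm_mem_range 0))), fun s => ?_⟩
      obtain ⟨t, ht⟩ := hσβ s
      exact ⟨t, by simp [xPerm_zero, cons_append_stream]; exact congrArg _ ht⟩
    · refine ⟨copyAt [true] σ * xPerm 0, mul_mem (copyAt_mem_range _ hσ) (xPerm_mem_range 0),
        fun s => ?_⟩
      obtain ⟨t, ht⟩ := hσβ s
      exact ⟨t, by simp [xPerm_zero, cons_append_stream]; exact congrArg _ ht⟩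

/-! ### The commutator trick -/

-- Any element with the property of `toPerm_conjugator_apply` would do.
def conjugator : ThompsonF := (xProd [4, 2, 1, 0])⁻¹ * xProd [7, 6, 4, 4, 3, 2, 1]

theorem toPerm_conjugator_apply {s : Cantor} (hs : (xPerm 1 * (xPerm 0)⁻¹) s ≠ s) :
    toPerm conjugator ([true, false, true, true, true] ++ₛ s) = true :: s := by
  have hW : ∀ z, toPerm conjugator z =
      (xPerm 0).symm ((xPerm 1).symm ((xPerm 2).symm ((xPerm 4).symm
        (xPerm 7 (xPerm 6 (xPerm 4 (xPerm 4 (xPerm 3 (xPerm 2 (xPerm 1 z)))))))))) := by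
    simp [conjugator]
  rw [hW]
  obtain ⟨a, b, s, rfl⟩ := exists_eq_cons_cons s
  obtain ⟨c, d, s, rfl⟩ := exists_eq_cons_cons s
  cases a <;> cases b <;> cases c <;>
    simp only [cons_append_stream, nil_append_stream, xPerm_succ_apply_true, xPerm_succ_apply_false,
      xPerm_succ_symm_apply_true, xPerm_zero, rotation_apply, rotation_symm_apply, rotate_true,
      rotate_false_false, rotate_false_true, rotateInv_false, rotateInv_true_true,
      rotateInv_true_false, Perm.mul_apply, Perm.coe_inv, ne_eq, not_true_eq_false] at hs ⊢

theorem conjugator_conj_commutatorElement {u v : ThompsonF}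
    (hu : toPerm u = copyAt [true, false] (xPerm 1))
    (hv : toPerm v = copyAt [true, false] (xPerm 3)) :
    conjugator * ⁅u, v⁆ * conjugator⁻¹ = ⁅x 0, x 1⁆ := by
  apply toPerm_injective
  have h13 : ⁅xPerm 1, xPerm 3⁆ = copyAt [true, true, true] (xPerm 1 * (xPerm 0)⁻¹) := by
    rw [commutatorElement_def, xPerm_conj (by norm_num), map_mul, map_inv]
    show xPerm (3 + 1) * (xPerm (3 + 0))⁻¹ = _
    rw [xPerm_add, xPerm_add]
    rfl
  have h01 : ⁅xPerm 0, xPerm 1⁆ = copyAt [true] (xPerm 1 * (xPerm 0)⁻¹) := by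
    rw [commutatorElement_def, xPerm_conj zero_lt_one, map_mul, map_inv]
    show xPerm (1 + 1) * (xPerm (1 + 0))⁻¹ = _
    rw [xPerm_add, xPerm_add]
    rfl
  have hcopy : toPerm ⁅u, v⁆ = copyAt [true, false, true, true, true] (xPerm 1 * (xPerm 0)⁻¹) := by
    rw [map_commutatorElement, hu, hv, ← map_commutatorElement, h13, ← copyAt_append]
    rfl
  rw [map_mul, map_mul, map_inv, hcopy, map_commutatorElement, toPerm_x, toPerm_x, h01]
  exact conj_copyAt fun s hs => toPerm_conjugator_apply hs

theorem exists_conj_apply_append_ne {n : ThompsonF} (hn : n ≠ 1) :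
    ∃ m, ∀ s t, toPerm (m⁻¹ * n * m) ([true, false] ++ₛ s) ≠ [true, false] ++ₛ t := by
  have hσ : toPerm n ≠ 1 := fun h => hn (toPerm_injective (h.trans (map_one _).symm))
  obtain ⟨β, hβ⟩ := exists_forall_apply_append_ne (toPerm_mem_prefixContinuousPerms n).1 hσ
  obtain ⟨_, ⟨m, rfl⟩, hm⟩ := exists_mem_range_maps_into_cylinder β
  refine ⟨m, fun s t e => ?_⟩
  obtain ⟨s', hs'⟩ := hm s
  obtain ⟨t', ht'⟩ := hm t
  apply hβ s' t'
  rw [← hs', ← ht', ← e]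
  simp

theorem map_commutatorElement_x_eq_one {G : Type*} [Group G] {φ : ThompsonF →* G}
    (hφ : ¬ Function.Injective φ) : φ ⁅x 0, x 1⁆ = 1 := by
  obtain ⟨n, hn1, hn⟩ : ∃ n, φ n = 1 ∧ n ≠ 1 := by
    simpa [injective_iff_map_eq_one] using hφ
  obtain ⟨m, hm⟩ := exists_conj_apply_append_ne hn
  obtain ⟨u, hu⟩ := copyAt_mem_range [true, false] (xPerm_mem_range 1)
  obtain ⟨v, hv⟩ := copyAt_mem_range [true, false] (xPerm_mem_range 3)
  have hc : Commute ((m⁻¹ * n * m) * u * (m⁻¹ * n * m)⁻¹) v := by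
    have := commute_conj_copyAt hm (xPerm 1) (xPerm 3)
    rw [← hu, ← hv, ← map_inv, ← map_mul, ← map_mul] at this
    exact toPerm_injective (by simpa only [map_mul] using this.eq)
  have huv : φ ⁅u, v⁆ = 1 := map_commutatorElement_eq_one_of_commute φ (by simp [hn1]) hc
  rw [← conjugator_conj_commutatorElement hu hv, map_mul, map_mul, huv, mul_one, map_inv,
    mul_inv_cancel]

end ThompsonF

/-- Thompson's group `F` has no proper non-abelian quotients: every non-injective
group homomorphism from `F` to any group has abelian image. -/
theorem thompsonF_no_proper_nonabelian_quotients {G : Type*} [Group G]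
    (φ : ThompsonF →* G) (hφ : ¬ Function.Injective φ) :
    ∀ x y : ThompsonF, Commute (φ x) (φ y) :=
  ThompsonF.commute_apply_of_commute_x φ <| by
    rw [← commutatorElement_eq_one_iff_commute, ← map_commutatorElement]
    exact ThompsonF.map_commutatorElement_x_eq_one hφ
end

section
/- Let f₀ ∈ PL₀(I) be a non-identity element, let (a,c) be an orbital of f₀ on which f₀(x) > x, and pick p ∈ (a,c). Let f₁ ∈ PL₀(I) be any function such that f₁ = f₀ on [p,c], f₁ is the identity on (a, f₀⁻¹(p)), f₀ and f₁ commute outside (a,c), and every orbital of f₁ meeting an orbital of f₀ is contained in it. Then f₀ and f₁ generate a subgroup of PL₀(I) isomorphic to Thompson's group F via x₀ ↦ f₀, x₁ ↦ f₁. -/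
/-- The support of a permutation `f` of `ℝ` : the set of points moved by `f`. -/
def Supp (f : Equiv.Perm ℝ) : Set ℝ := {x : ℝ | f x ≠ x}

/-- `IsPL0 f` says that `f` is (the extension by the identity on `ℝ \ [0,1]` of) a
piecewise-linear orientation-preserving homeomorphism of the unit interval `[0,1]`
with only finitely many breakpoints; this represents membership in `PL₀(I)`.
The finite set `B` collects the possible points of non-differentiability: away from
`B` the map is locally affine. -/
def IsPL0 (f : Equiv.Perm ℝ) : Prop :=
  StrictMono ⇑f ∧ (∀ x : ℝ, x ≤ 0 → f x = x) ∧ (∀ x : ℝ, 1 ≤ x → f x = x) ∧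
    ∃ B : Finset ℝ, ∀ x : ℝ, x ∉ B → ∃ s t : ℝ, ∀ᶠ y in nhds x, f y = s * y + t

/-- `IsOrbital f a b` : the open interval `(a,b)` is an orbital of `f`, i.e. a
connected component of `Supp f` (an open interval contained in the support whose
endpoints are fixed by `f`). -/
def IsOrbital (f : Equiv.Perm ℝ) (a b : ℝ) : Prop :=
  a < b ∧ Set.Ioo a b ⊆ Supp f ∧ f a = a ∧ f b = b
open scoped commutatorElement
/-!
Write `x_{n+1} = f₀ⁿ f₁ f₀⁻ⁿ`. The relations of `F` hold because `f₁⁻¹ f₀` is the identity on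
`[p, c]` and `x_n` (`n ≥ 2`) is the identity on `(a, p]`, while outside `(a, c)` everything is
generated by the commuting maps `f₀` and `f₁`.

For injectivity, every element of `F` is `Q⁻¹ P` with `P`, `Q` positive words in the `x_n`, so it
suffices that positive words with the same image are equal. Using `x_k x_n = x_{n+1} x_k` (`k < n`),
move the letters `x₀` of a positive word to its right end. Near `a` every `x_n` with `n ≥ 1` is the
identity while `f₀` has no fixed point, so the images determine the number of these letters; the
same argument near the left end `b` of the orbital of `f₁` containing `[p, c)` handles `x₁`. When
neither letter occurs, conjugating by `x₀` lowers every index, and induction on (length, letter sum)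
concludes.
-/
open Set Equiv Topology

section Words

variable {G H : Type*} [Group G] [Group H]

def thompsonGen (g₀ g₁ : G) : ℕ → G
  | 0 => g₀
  | n + 1 => g₀ ^ n * g₁ * (g₀ ^ n)⁻¹

def posWord (g₀ g₁ : G) (l : List ℕ) : G := (l.map (thompsonGen g₀ g₁)).prod

variable {g₀ g₁ : G}

@[simp] theorem thompsonGen_zero : thompsonGen g₀ g₁ 0 = g₀ := rfl

@[simp] theorem thompsonGen_one : thompsonGen g₀ g₁ 1 = g₁ := by simp [thompsonGen]

theorem thompsonGen_add_two (n : ℕ) :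
    thompsonGen g₀ g₁ (n + 2) = g₀ * thompsonGen g₀ g₁ (n + 1) * g₀⁻¹ := by
  simp only [thompsonGen, pow_succ']
  group

theorem map_thompsonGen (φ : G →* H) (n : ℕ) :
    φ (thompsonGen g₀ g₁ n) = thompsonGen (φ g₀) (φ g₁) n := by
  cases n <;> simp [thompsonGen]

theorem thompsonGen_mem {K : Subgroup G} (h₀ : g₀ ∈ K) (h₁ : g₁ ∈ K) (n : ℕ) :
    thompsonGen g₀ g₁ n ∈ K := by
  cases n with
  | zero => exact h₀
  | succ n => exact mul_mem (mul_mem (pow_mem h₀ n) h₁) (inv_mem (pow_mem h₀ n))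

@[simp] theorem posWord_nil : posWord g₀ g₁ [] = 1 := rfl

@[simp] theorem posWord_cons (i : ℕ) (l : List ℕ) :
    posWord g₀ g₁ (i :: l) = thompsonGen g₀ g₁ i * posWord g₀ g₁ l := by
  simp [posWord]

theorem posWord_append (l₁ l₂ : List ℕ) :
    posWord g₀ g₁ (l₁ ++ l₂) = posWord g₀ g₁ l₁ * posWord g₀ g₁ l₂ := by
  simp [posWord]

theorem map_posWord (φ : G →* H) (l : List ℕ) :
    φ (posWord g₀ g₁ l) = posWord (φ g₀) (φ g₁) l := by
  simp [posWord, map_list_prod, Function.comp_def, map_thompsonGen]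

theorem posWord_mem {K : Subgroup G} {l : List ℕ} (h : ∀ i ∈ l, thompsonGen g₀ g₁ i ∈ K) :
    posWord g₀ g₁ l ∈ K :=
  K.list_prod_mem (by simpa using h)

theorem posWord_eq_conj {l : List ℕ} (hl : ∀ i ∈ l, 2 ≤ i) :
    posWord g₀ g₁ l = g₀ * posWord g₀ g₁ (l.map (· - 1)) * g₀⁻¹ := by
  induction l with
  | nil => simp
  | cons i l ih =>
    obtain ⟨n, rfl⟩ : ∃ n, i = n + 2 := ⟨i - 2, by have := hl i (by simp); omega⟩
    simp only [posWord_cons, List.map_cons, ih (fun j hj => hl j (by simp [hj])),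
      thompsonGen_add_two, show n + 2 - 1 = n + 1 from rfl]
    group

end Words

section Relations

variable {G : Type*} [Group G] {g₀ g₁ : G}

theorem thompsonGen_conj_succ {k n : ℕ} (hk : 1 ≤ k) (hn : 1 ≤ n) :
    thompsonGen g₀ g₁ (k + 1) * thompsonGen g₀ g₁ (n + 1) * (thompsonGen g₀ g₁ (k + 1))⁻¹ =
      g₀ * (thompsonGen g₀ g₁ k * thompsonGen g₀ g₁ n * (thompsonGen g₀ g₁ k)⁻¹) * g₀⁻¹ := by
  obtain ⟨k, rfl⟩ := Nat.exists_eq_add_of_le' hk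
  obtain ⟨n, rfl⟩ := Nat.exists_eq_add_of_le' hn
  rw [thompsonGen_add_two, thompsonGen_add_two]
  group

theorem thompsonGen_conj_one_of_commute {n : ℕ}
    (hy : Commute (g₁⁻¹ * g₀) (thompsonGen g₀ g₁ (n + 1))) :
    g₁ * thompsonGen g₀ g₁ (n + 1) * g₁⁻¹ = thompsonGen g₀ g₁ (n + 2) := by
  rw [thompsonGen_add_two]
  generalize thompsonGen g₀ g₁ (n + 1) = x at hy ⊢
  calc g₁ * x * g₁⁻¹ = g₁ * (x * (g₁⁻¹ * g₀)) * (g₁⁻¹ * g₀)⁻¹ * g₁⁻¹ := by group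
    _ = g₁ * ((g₁⁻¹ * g₀) * x) * (g₁⁻¹ * g₀)⁻¹ * g₁⁻¹ := by rw [hy.eq]
    _ = g₀ * x * g₀⁻¹ := by group

def SatisfiesThompsonRels (g₀ g₁ : G) : Prop :=
  Commute (g₁⁻¹ * g₀) (thompsonGen g₀ g₁ 2) ∧ Commute (g₁⁻¹ * g₀) (thompsonGen g₀ g₁ 3)

theorem lift_thompsonRels_eq_one_iff (f : Fin 2 → G) :
    (∀ r ∈ thompsonRels, FreeGroup.lift f r = 1) ↔ SatisfiesThompsonRels (f 0) (f 1) := by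
  simp [thompsonRels, SatisfiesThompsonRels, thompsonGen, map_commutatorElement,
    commutatorElement_eq_one_iff_commute]

theorem satisfiesThompsonRels_of :
    SatisfiesThompsonRels (PresentedGroup.of 0 : ThompsonF) (PresentedGroup.of 1) := by
  refine (lift_thompsonRels_eq_one_iff _).1 fun r hr => ?_
  rw [← FreeGroup.lift_unique (f := PresentedGroup.of) (PresentedGroup.mk _) fun _ => rfl]
  exact PresentedGroup.one_of_mem hr

theorem closure_of_zero_one_eq_top :
    Subgroup.closure {PresentedGroup.of 0, PresentedGroup.of 1} = (⊤ : Subgroup ThompsonF) := by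
  rw [← PresentedGroup.closure_range_of]
  congr 1
  ext
  simp [Fin.exists_fin_two, eq_comm]

namespace SatisfiesThompsonRels

variable (hR : SatisfiesThompsonRels g₀ g₁)
include hR

theorem commute_thompsonGen {n : ℕ} (hn : 2 ≤ n) :
    Commute (g₁⁻¹ * g₀) (thompsonGen g₀ g₁ n) := by
  induction n using Nat.strong_induction_on with
  | _ n ih =>
    match n, hn with
    | 2, _ => exact hR.1
    | 3, _ => exact hR.2
    | m + 4, _ =>
      have hconj : thompsonGen g₀ g₁ 2 * thompsonGen g₀ g₁ (m + 3) * (thompsonGen g₀ g₁ 2)⁻¹ =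
          thompsonGen g₀ g₁ (m + 4) := by
        rw [thompsonGen_conj_succ le_rfl (by omega), thompsonGen_one,
          thompsonGen_conj_one_of_commute (ih (m + 2) (by omega) (by omega)),
          ← thompsonGen_add_two]
      rw [← hconj]
      exact (hR.1.mul_right (ih (m + 3) (by omega) (by omega))).mul_right hR.1.inv_right

theorem conj_thompsonGen {k n : ℕ} (hkn : k < n) :
    thompsonGen g₀ g₁ k * thompsonGen g₀ g₁ n * (thompsonGen g₀ g₁ k)⁻¹ =
      thompsonGen g₀ g₁ (n + 1) := by
  obtain ⟨n, rfl⟩ := Nat.exists_eq_add_of_lt hkn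
  induction k generalizing n with
  | zero => rw [zero_add, thompsonGen_zero, ← thompsonGen_add_two]
  | succ k ih =>
    rcases k with _ | k
    · rw [thompsonGen_one, thompsonGen_conj_one_of_commute (hR.commute_thompsonGen (by omega))]
    · rw [show k + 1 + 1 + n + 1 = (k + 1 + n + 1) + 1 by omega,
        thompsonGen_conj_succ (by omega) (by omega), ih n (by omega), ← thompsonGen_add_two]

theorem thompsonGen_mul_posWord {t : ℕ} {l : List ℕ} (hl : ∀ i ∈ l, t < i) :
    thompsonGen g₀ g₁ t * posWord g₀ g₁ l =
      posWord g₀ g₁ (l.map (· + 1)) * thompsonGen g₀ g₁ t := by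
  induction l with
  | nil => simp
  | cons n l ih =>
    rw [posWord_cons, ← mul_assoc, mul_inv_eq_iff_eq_mul.mp (hR.conj_thompsonGen (hl n (by simp))),
      mul_assoc, ih (fun j hj => hl j (by simp [hj])), List.map_cons, posWord_cons, mul_assoc]

theorem exists_posWord_eq_mul_pow (t : ℕ) {l : List ℕ} (hl : ∀ i ∈ l, t ≤ i) :
    ∃ l' e, (∀ i ∈ l', t < i) ∧ posWord g₀ g₁ l = posWord g₀ g₁ l' * thompsonGen g₀ g₁ t ^ e ∧
      l.length = l'.length + e ∧ (e = 0 → l' = l) := by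
  induction l with
  | nil => exact ⟨[], 0, by simp, by simp, rfl, fun _ => rfl⟩
  | cons i l ih =>
    obtain ⟨l', e, hl', heq, hlen, hzero⟩ := ih fun j hj => hl j (by simp [hj])
    rcases (hl i (by simp)).eq_or_lt with rfl | hi
    · refine ⟨l'.map (· + 1), e + 1, by grind, ?_, by simp [hlen]; omega, by omega⟩
      rw [posWord_cons, heq, ← mul_assoc, hR.thompsonGen_mul_posWord hl', mul_assoc, ← pow_succ']
    · refine ⟨i :: l', e, by grind, ?_, by simp [hlen]; omega, fun h => by rw [hzero h]⟩
      rw [posWord_cons, heq, posWord_cons, mul_assoc]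

end SatisfiesThompsonRels

end Relations

section Injectivity

variable {G H : Type*} [Group G] [Group H] {g₀ g₁ : G}

theorem List.sum_map_sub_one_add_length {l : List ℕ} (hl : ∀ i ∈ l, 1 ≤ i) :
    (l.map (· - 1)).sum + l.length = l.sum := by
  induction l with
  | nil => rfl
  | cons i l ih =>
    have := hl i (by simp)
    simp only [List.map_cons, List.sum_cons, List.length_cons, ← ih fun j hj => hl j (by simp [hj])]
    omega

def SeparatesPowers (f₀ f₁ : H) (t : ℕ) : Prop :=
  ∀ ⦃P Q : List ℕ⦄ ⦃m n : ℕ⦄, (∀ i ∈ P, t < i) → (∀ i ∈ Q, t < i) →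
    posWord f₀ f₁ P * thompsonGen f₀ f₁ t ^ m = posWord f₀ f₁ Q * thompsonGen f₀ f₁ t ^ n → m = n

namespace SatisfiesThompsonRels

variable (hR : SatisfiesThompsonRels g₀ g₁)
include hR

theorem posWord_mul_inv_thompsonGen (P : List ℕ) (i : ℕ) :
    (∃ P', posWord g₀ g₁ P * (thompsonGen g₀ g₁ i)⁻¹ = posWord g₀ g₁ P') ∨
      ∃ k P', posWord g₀ g₁ P * (thompsonGen g₀ g₁ i)⁻¹ =
        (thompsonGen g₀ g₁ k)⁻¹ * posWord g₀ g₁ P' := by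
  induction P with
  | nil => exact .inr ⟨i, [], by simp⟩
  | cons j P ih =>
    simp only [posWord_cons, mul_assoc]
    rcases ih with ⟨P', h⟩ | ⟨k, P', h⟩
    · exact .inl ⟨j :: P', by rw [h, posWord_cons]⟩
    rw [h, ← mul_assoc]
    rcases lt_trichotomy j k with hjk | rfl | hkj
    · refine .inr ⟨k + 1, j :: P', ?_⟩
      rw [← hR.conj_thompsonGen hjk, posWord_cons]
      group
    · exact .inl ⟨P', by group⟩
    · refine .inr ⟨k, (j + 1) :: P', ?_⟩
      rw [posWord_cons, ← hR.conj_thompsonGen hkj]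
      group

theorem exists_eq_inv_posWord_mul_posWord {x : G} (hx : x ∈ Subgroup.closure {g₀, g₁}) :
    ∃ N P, x = (posWord g₀ g₁ N)⁻¹ * posWord g₀ g₁ P := by
  have hgen : ∀ y ∈ ({g₀, g₁} : Set G), ∃ i, y = thompsonGen g₀ g₁ i := by
    rintro y (rfl | rfl)
    exacts [⟨0, rfl⟩, ⟨1, by simp⟩]
  induction hx using Subgroup.closure_induction_right with
  | one => exact ⟨[], [], by simp⟩
  | mul_right x _ y hy ih =>
    obtain ⟨N, P, rfl⟩ := ih
    obtain ⟨i, rfl⟩ := hgen y hy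
    exact ⟨N, P ++ [i], by simp [posWord_append, mul_assoc]⟩
  | mul_inv_cancel x _ y hy ih =>
    obtain ⟨N, P, rfl⟩ := ih
    obtain ⟨i, rfl⟩ := hgen y hy
    rcases hR.posWord_mul_inv_thompsonGen P i with ⟨P', h⟩ | ⟨k, P', h⟩
    · exact ⟨N, P', by rw [mul_assoc, h]⟩
    · exact ⟨k :: N, P', by rw [mul_assoc, h, posWord_cons]; group⟩

theorem exists_cancel_pow_of_map_eq (φ : G →* H) {t : ℕ} (ht : SeparatesPowers (φ g₀) (φ g₁) t)
    {P Q : List ℕ} (hP : ∀ i ∈ P, t ≤ i) (hQ : ∀ i ∈ Q, t ≤ i)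
    (h : φ (posWord g₀ g₁ P) = φ (posWord g₀ g₁ Q)) :
    ∃ P' Q' e, (∀ i ∈ P', t < i) ∧ (∀ i ∈ Q', t < i) ∧
      φ (posWord g₀ g₁ P') = φ (posWord g₀ g₁ Q') ∧
      posWord g₀ g₁ P = posWord g₀ g₁ P' * thompsonGen g₀ g₁ t ^ e ∧
      posWord g₀ g₁ Q = posWord g₀ g₁ Q' * thompsonGen g₀ g₁ t ^ e ∧
      P.length = P'.length + e ∧ Q.length = Q'.length + e ∧ (e = 0 → P' = P ∧ Q' = Q) := by
  obtain ⟨P', e, hP', hPe, hPlen, hP0⟩ := hR.exists_posWord_eq_mul_pow t hP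
  obtain ⟨Q', e', hQ', hQe, hQlen, hQ0⟩ := hR.exists_posWord_eq_mul_pow t hQ
  have hφ : posWord (φ g₀) (φ g₁) P' * thompsonGen (φ g₀) (φ g₁) t ^ e =
      posWord (φ g₀) (φ g₁) Q' * thompsonGen (φ g₀) (φ g₁) t ^ e' := by
    simpa only [hPe, hQe, map_mul, map_pow, map_posWord, map_thompsonGen] using h
  obtain rfl := ht hP' hQ' hφ
  refine ⟨P', Q', e, hP', hQ', ?_, hPe, hQe, hPlen, hQlen, fun he => ⟨hP0 he, hQ0 he⟩⟩
  rw [map_posWord, map_posWord]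
  exact mul_right_cancel hφ

theorem posWord_eq_of_map_eq (φ : G →* H) (h₀ : SeparatesPowers (φ g₀) (φ g₁) 0)
    (h₁ : SeparatesPowers (φ g₀) (φ g₁) 1) (P Q : List ℕ)
    (h : φ (posWord g₀ g₁ P) = φ (posWord g₀ g₁ Q)) : posWord g₀ g₁ P = posWord g₀ g₁ Q := by
  by_cases hPQ : P = [] ∧ Q = []
  · rw [hPQ.1, hPQ.2]
  obtain ⟨P₁, Q₁, e, hP₁, hQ₁, hφ₁, hPe, hQe, hPlen₁, hQlen₁, he⟩ :=
    hR.exists_cancel_pow_of_map_eq φ h₀ (fun _ _ => Nat.zero_le _) (fun _ _ => Nat.zero_le _) h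
  rcases Nat.eq_zero_or_pos e with rfl | hepos
  · obtain ⟨rfl, rfl⟩ := he rfl
    obtain ⟨P₂, Q₂, d, hP₂, hQ₂, hφ₂, hPd, hQd, hPlen₂, hQlen₂, hd⟩ :=
      hR.exists_cancel_pow_of_map_eq φ h₁ hP₁ hQ₁ h
    rcases Nat.eq_zero_or_pos d with rfl | hdpos
    · obtain ⟨rfl, rfl⟩ := hd rfl
      have hdown : φ (posWord g₀ g₁ (P₂.map (· - 1))) = φ (posWord g₀ g₁ (Q₂.map (· - 1))) := by
        rw [posWord_eq_conj hP₂, posWord_eq_conj hQ₂, map_mul, map_mul, map_mul, map_mul] at h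
        exact mul_left_cancel (mul_right_cancel h)
      have hPs := List.sum_map_sub_one_add_length (l := P₂) (fun i hi => (hP₂ i hi).le)
      have hQs := List.sum_map_sub_one_add_length (l := Q₂) (fun i hi => (hQ₂ i hi).le)
      have hlen : 0 < P₂.length + Q₂.length := by
        rw [Nat.pos_iff_ne_zero]; simpa using hPQ
      rw [posWord_eq_conj hP₂, posWord_eq_conj hQ₂,
        posWord_eq_of_map_eq φ h₀ h₁ (P₂.map (· - 1)) (Q₂.map (· - 1)) hdown]
    · rw [hPd, hQd, posWord_eq_of_map_eq φ h₀ h₁ P₂ Q₂ hφ₂]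
  · rw [hPe, hQe, posWord_eq_of_map_eq φ h₀ h₁ P₁ Q₁ hφ₁]
-- Cancelling a power shortens the words; conjugating by `g₀` keeps their lengths and lowers their
-- letter sums (`hPs`, `hQs`, `hlen`).
termination_by (P.length + Q.length, P.sum + Q.sum)
decreasing_by all_goals simp_wf; subst_vars; rw [Prod.lex_def]; omega

theorem injective_of_separatesPowers (hgen : Subgroup.closure {g₀, g₁} = ⊤) (φ : G →* H)
    (h₀ : SeparatesPowers (φ g₀) (φ g₁) 0) (h₁ : SeparatesPowers (φ g₀) (φ g₁) 1) :
    Function.Injective φ := by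
  refine (injective_iff_map_eq_one φ).2 fun x hx => ?_
  obtain ⟨N, P, rfl⟩ := hR.exists_eq_inv_posWord_mul_posWord (hgen ▸ Subgroup.mem_top x)
  rw [map_mul, map_inv, inv_mul_eq_one] at hx
  rw [hR.posWord_eq_of_map_eq φ h₀ h₁ N P hx, inv_mul_cancel]

end SatisfiesThompsonRels

end Injectivity

theorem Equiv.Perm.apply_eq_self_of_mem_fixingSubgroup {α : Type*} {f : Perm α} {s : Set α}
    (hf : f ∈ fixingSubgroup (Perm α) s) {x : α} (hx : x ∈ s) : f x = x :=
  (mem_fixingSubgroup_iff _).1 hf x hx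

section StrictMonoPerms

variable {α : Type*} [LinearOrder α]

def strictMonoPerms (α : Type*) [LinearOrder α] : Subgroup (Perm α) where
  carrier := {f | StrictMono f}
  mul_mem' hf hg := hf.comp hg
  one_mem' := strictMono_id
  inv_mem' {f} hf _ _ hxy := hf.lt_iff_lt.1 (by simpa using hxy)

theorem StrictMono.apply_mem_Ioo_iff {f : α → α} (hf : StrictMono f) {a c x : α}
    (ha : f a = a) (hc : f c = c) : f x ∈ Ioo a c ↔ x ∈ Ioo a c := by
  conv_rhs => rw [mem_Ioo, ← hf.lt_iff_lt (a := a), ← hf.lt_iff_lt (b := c), ha, hc]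
  rfl

theorem StrictMono.apply_mem_Icc_iff {f : α → α} (hf : StrictMono f) {a c x : α}
    (ha : f a = a) (hc : f c = c) : f x ∈ Icc a c ↔ x ∈ Icc a c := by
  conv_rhs => rw [mem_Icc, ← hf.le_iff_le (a := a), ← hf.le_iff_le (b := c), ha, hc]
  rfl

theorem continuous_of_mem_strictMonoPerms [TopologicalSpace α] [OrderTopology α]
    [DenselyOrdered α] {f : Perm α} (hf : f ∈ strictMonoPerms α) : Continuous f :=
  hf.monotone.continuous_of_surjective f.surjective

theorem eqOn_Icc_of_eqOn_Ioo [TopologicalSpace α] [OrderTopology α] [DenselyOrdered α]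
    {f : α → α} (hf : Continuous f) {a b : α} (hab : a < b) (h : EqOn f id (Ioo a b)) :
    EqOn f id (Icc a b) := by
  simpa [closure_Ioo hab.ne] using h.closure hf continuous_id

end StrictMonoPerms

theorem exists_fixed_forall_lt_apply {f : ℝ → ℝ} (hf : Continuous f) {a p : ℝ} (hap : a ≤ p)
    (ha : f a ≤ a) (hp : p < f p) : ∃ b ∈ Ico a p, f b = b ∧ ∀ x ∈ Ioc b p, x < f x := by
  set S := Icc a p ∩ {x | f x ≤ x}
  have hS : IsCompact S := isCompact_Icc.inter_right (isClosed_le hf continuous_id)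
  have hb : sSup S ∈ S := hS.sSup_mem ⟨a, ⟨le_rfl, hap⟩, ha⟩
  have hlt : ∀ x ∈ Ioc (sSup S) p, x < f x := fun x hx => not_le.1 fun hfx =>
    hx.1.not_ge (le_csSup hS.bddAbove ⟨⟨hb.1.1.trans hx.1.le, hx.2⟩, hfx⟩)
  have hbp : sSup S < p := hb.1.2.lt_of_ne fun h => (h ▸ hb.2).not_gt hp
  refine ⟨sSup S, ⟨hb.1.1, hbp⟩, hb.2.antisymm ?_, hlt⟩
  refine ge_of_tendsto (hf.continuousAt.tendsto.mono_left nhdsWithin_le_nhds :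
    Filter.Tendsto f (𝓝[>] (sSup S)) _) ?_
  filter_upwards [Ioo_mem_nhdsGT hbp] with x hx using (hx.1.trans (hlt x ⟨hx.1, hx.2.le⟩)).le

structure IsPositiveOrbital (u : Perm ℝ) (a c : ℝ) : Prop where
  mem_strictMonoPerms : u ∈ strictMonoPerms ℝ
  apply_left : u a = a
  apply_right : u c = c
  lt_apply : ∀ x ∈ Ioo a c, x < u x

namespace IsPositiveOrbital

variable {u : Perm ℝ} {a c : ℝ} (hu : IsPositiveOrbital u a c)
include hu

theorem pow_apply_mem_Ioo_iff (n : ℕ) {x : ℝ} : (u ^ n) x ∈ Ioo a c ↔ x ∈ Ioo a c :=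
  StrictMono.apply_mem_Ioo_iff (pow_mem hu.mem_strictMonoPerms n)
    (Perm.pow_apply_eq_self_of_apply_eq_self hu.apply_left n)
    (Perm.pow_apply_eq_self_of_apply_eq_self hu.apply_right n)

theorem strictMono_pow_apply {x : ℝ} (hx : x ∈ Ioo a c) : StrictMono fun n : ℕ => (u ^ n) x :=
  strictMono_nat_of_lt_succ fun n => by
    rw [pow_succ', Perm.mul_apply]
    exact hu.lt_apply _ ((hu.pow_apply_mem_Ioo_iff n).2 hx)

theorem inv_pow_apply_mem_Ioo {r : ℝ} (hrc : r ≤ c) (n : ℕ) {x : ℝ} (hx : x ∈ Ioo a r) :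
    (u ^ n)⁻¹ x ∈ Ioo a r := by
  have hy : (u ^ n)⁻¹ x ∈ Ioo a c := by
    rw [← hu.pow_apply_mem_Ioo_iff n, Perm.coe_inv, apply_symm_apply]
    exact ⟨hx.1, hx.2.trans_le hrc⟩
  have hle : (u ^ n)⁻¹ x ≤ x := by
    simpa using (hu.strictMono_pow_apply hy).monotone (Nat.zero_le n)
  exact ⟨hy.1, hle.trans_lt hx.2⟩

theorem eq_of_mul_pow_eq_mul_pow {r : ℝ} (har : a < r) (hrc : r ≤ c) {v w : Perm ℝ}
    (hv : v ∈ fixingSubgroup (Perm ℝ) (Ioo a r))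
    (hw : w ∈ fixingSubgroup (Perm ℝ) (Ioo a r)) {m n : ℕ}
    (h : v * u ^ m = w * u ^ n) : m = n := by
  set N := max m n
  have hN : ∀ᶠ x in 𝓝[>] a, x ∈ Ioo a r ∧ (u ^ N) x < r := by
    refine Filter.inter_mem (Ioo_mem_nhdsGT har) (nhdsWithin_le_nhds ?_)
    have := (continuous_of_mem_strictMonoPerms (pow_mem hu.mem_strictMonoPerms N)).continuousAt
      (x := a)
    rw [ContinuousAt, Perm.pow_apply_eq_self_of_apply_eq_self hu.apply_left] at this
    exact this (Iio_mem_nhds har)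
  obtain ⟨x, hx, hxN⟩ := hN.exists
  have hxc : x ∈ Ioo a c := ⟨hx.1, hx.2.trans_le hrc⟩
  have hmem : ∀ k ≤ N, (u ^ k) x ∈ Ioo a r := fun k hk =>
    ⟨((hu.pow_apply_mem_Ioo_iff k).2 hxc).1,
      ((hu.strictMono_pow_apply hxc).monotone hk).trans_lt hxN⟩
  have hx' := congr($h x)
  rw [Perm.mul_apply, Perm.mul_apply,
    Perm.apply_eq_self_of_mem_fixingSubgroup hv (hmem m (le_max_left m n)),
    Perm.apply_eq_self_of_mem_fixingSubgroup hw (hmem n (le_max_right m n))] at hx'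
  exact (hu.strictMono_pow_apply hxc).injective hx'

end IsPositiveOrbital

structure NicePair (f₀ f₁ : Perm ℝ) (a c p : ℝ) : Prop where
  orbital : IsPositiveOrbital f₀ a c
  mem_strictMonoPerms : f₁ ∈ strictMonoPerms ℝ
  mem_Ioo : p ∈ Ioo a c
  agree : ∀ x ∈ Icc p c, f₁ x = f₀ x
  eq_self : ∀ x ∈ Ioo a (f₀⁻¹ p), f₁ x = x
  commute_outside : ∀ x ∉ Ioo a c, f₀ (f₁ x) = f₁ (f₀ x)

namespace NicePair

variable {f₀ f₁ : Perm ℝ} {a c p : ℝ} (H : NicePair f₀ f₁ a c p)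
include H

theorem inv_apply_mem_Ioo : f₀⁻¹ p ∈ Ioo a p := by
  have hq : f₀⁻¹ p ∈ Ioo a c := by
    rw [← H.orbital.pow_apply_mem_Ioo_iff 1, pow_one, Perm.coe_inv, apply_symm_apply]
    exact H.mem_Ioo
  refine ⟨hq.1, ?_⟩
  simpa using H.orbital.lt_apply _ hq

theorem apply_left : f₁ a = a :=
  eqOn_Icc_of_eqOn_Ioo (continuous_of_mem_strictMonoPerms H.mem_strictMonoPerms)
    H.inv_apply_mem_Ioo.1 H.eq_self ⟨le_rfl, H.inv_apply_mem_Ioo.1.le⟩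

theorem apply_right : f₁ c = c :=
  (H.agree c ⟨H.mem_Ioo.2.le, le_rfl⟩).trans H.orbital.apply_right

theorem pow_apply_apply_of_notMem {x : ℝ} (hx : x ∉ Ioo a c) (n : ℕ) :
    (f₀ ^ n) (f₁ x) = f₁ ((f₀ ^ n) x) := by
  induction n with
  | zero => rfl
  | succ n ih =>
    rw [pow_succ', Perm.mul_apply, Perm.mul_apply, ih,
      H.commute_outside _ (mt (H.orbital.pow_apply_mem_Ioo_iff n).1 hx)]

theorem thompsonGen_succ_apply_of_notMem {x : ℝ} (hx : x ∉ Ioo a c) (n : ℕ) :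
    thompsonGen f₀ f₁ (n + 1) x = f₁ x := by
  have hy : (f₀ ^ n)⁻¹ x ∉ Ioo a c := by
    rwa [← H.orbital.pow_apply_mem_Ioo_iff n, Perm.coe_inv, apply_symm_apply]
  simp only [thompsonGen, Perm.mul_apply, H.pow_apply_apply_of_notMem hy]
  simp

theorem thompsonGen_succ_mem_fixingSubgroup (n : ℕ) :
    thompsonGen f₀ f₁ (n + 1) ∈ fixingSubgroup (Perm ℝ) (Ioo a (f₀⁻¹ p)) := by
  refine (mem_fixingSubgroup_iff _).2 fun x hx => ?_
  have hy := H.orbital.inv_pow_apply_mem_Ioo (H.inv_apply_mem_Ioo.2.trans H.mem_Ioo.2).le n hx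
  simp only [thompsonGen, Perm.smul_def, Perm.mul_apply]
  rw [H.eq_self _ hy, Perm.coe_inv, apply_symm_apply]

theorem thompsonGen_add_two_mem_fixingSubgroup (n : ℕ) :
    thompsonGen f₀ f₁ (n + 2) ∈ fixingSubgroup (Perm ℝ) (Ioo a p) := by
  refine (mem_fixingSubgroup_iff _).2 fun x hx => ?_
  have hinv : StrictMono ⇑f₀⁻¹ := inv_mem H.orbital.mem_strictMonoPerms
  have hy : f₀⁻¹ x ∈ Ioo a (f₀⁻¹ p) :=
    ⟨by simpa [Perm.inv_eq_iff_eq.2 H.orbital.apply_left.symm] using hinv hx.1, hinv hx.2⟩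
  rw [thompsonGen_add_two, Perm.smul_def, Perm.mul_apply, Perm.mul_apply,
    Perm.apply_eq_self_of_mem_fixingSubgroup (H.thompsonGen_succ_mem_fixingSubgroup n) hy]
  simp

theorem inv_mul_eqOn_Icc : EqOn ⇑(f₁⁻¹ * f₀) id (Icc p c) := fun x hx => by
  rw [Perm.mul_apply, id, Perm.inv_eq_iff_eq, H.agree x hx]

theorem thompsonGen_add_two_eqOn_Icc (n : ℕ) : EqOn ⇑(thompsonGen f₀ f₁ (n + 2)) id (Icc a p) :=
  eqOn_Icc_of_eqOn_Ioo (continuous_of_mem_strictMonoPerms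
      (thompsonGen_mem H.orbital.mem_strictMonoPerms H.mem_strictMonoPerms _)) H.mem_Ioo.1
    fun _ hx => Perm.apply_eq_self_of_mem_fixingSubgroup
      (H.thompsonGen_add_two_mem_fixingSubgroup n) hx

theorem commute_thompsonGen (n : ℕ) : Commute (f₁⁻¹ * f₀) (thompsonGen f₀ f₁ (n + 2)) := by
  have hg : f₁⁻¹ * f₀ ∈ strictMonoPerms ℝ :=
    mul_mem (inv_mem H.mem_strictMonoPerms) H.orbital.mem_strictMonoPerms
  have hX : thompsonGen f₀ f₁ (n + 2) ∈ strictMonoPerms ℝ :=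
    thompsonGen_mem H.orbital.mem_strictMonoPerms H.mem_strictMonoPerms _
  have hg_apply : ∀ x, (f₁⁻¹ * f₀) x = f₁⁻¹ (f₀ x) := fun _ => rfl
  have hga : (f₁⁻¹ * f₀) a = a := by
    rw [hg_apply, Perm.inv_eq_iff_eq, H.orbital.apply_left, H.apply_left]
  have hX_out : ∀ x ∉ Ioo a c, thompsonGen f₀ f₁ (n + 2) x = f₁ x :=
    fun x hx => H.thompsonGen_succ_apply_of_notMem hx (n + 1)
  have hXc : thompsonGen f₀ f₁ (n + 2) c = c := (hX_out c (by simp)).trans H.apply_right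
  have hg_Icc := H.inv_mul_eqOn_Icc
  have hX_Icc := H.thompsonGen_add_two_eqOn_Icc n
  have hp : p ∈ Icc a p ∩ Icc p c := ⟨⟨H.mem_Ioo.1.le, le_rfl⟩, le_rfl, H.mem_Ioo.2.le⟩
  generalize f₁⁻¹ * f₀ = g at *
  generalize thompsonGen f₀ f₁ (n + 2) = X at *
  refine Equiv.ext fun x => ?_
  rw [Perm.mul_apply, Perm.mul_apply]
  by_cases hxac : x ∈ Ioo a c
  · rcases lt_or_ge x p with hxp | hpx
    · have hgx : g x ∈ Ioo a p := (hg.apply_mem_Ioo_iff hga (hg_Icc hp.2)).2 ⟨hxac.1, hxp⟩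
      rw [hX_Icc ⟨hxac.1.le, hxp.le⟩, hX_Icc (Ioo_subset_Icc_self hgx), id, id]
    · have hXx : X x ∈ Icc p c := (hX.apply_mem_Icc_iff (hX_Icc hp.1) hXc).2 ⟨hpx, hxac.2.le⟩
      rw [hg_Icc ⟨hpx, hxac.2.le⟩, hg_Icc hXx, id, id]
  · have hgx : g x ∉ Ioo a c :=
      mt (hg.apply_mem_Ioo_iff hga (hg_Icc ⟨H.mem_Ioo.2.le, le_rfl⟩)).1 hxac
    rw [hX_out x hxac, hX_out _ hgx, hg_apply, hg_apply, H.commute_outside x hxac]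
    simp

theorem satisfiesThompsonRels : SatisfiesThompsonRels f₀ f₁ :=
  ⟨H.commute_thompsonGen 0, H.commute_thompsonGen 1⟩

theorem exists_isPositiveOrbital : ∃ b, a ≤ b ∧ b < p ∧ IsPositiveOrbital f₁ b c := by
  have hfp : p < f₁ p := by
    rw [H.agree p ⟨le_rfl, H.mem_Ioo.2.le⟩]
    exact H.orbital.lt_apply p H.mem_Ioo
  obtain ⟨b, ⟨hab, hbp⟩, hfb, hlt⟩ := exists_fixed_forall_lt_apply
    (continuous_of_mem_strictMonoPerms H.mem_strictMonoPerms) H.mem_Ioo.1.le H.apply_left.le hfp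
  refine ⟨b, hab, hbp, H.mem_strictMonoPerms, hfb, H.apply_right, fun x hx => ?_⟩
  rcases le_or_gt x p with hxp | hpx
  · exact hlt x ⟨hx.1, hxp⟩
  · rw [H.agree x ⟨hpx.le, hx.2.le⟩]
    exact H.orbital.lt_apply x ⟨hab.trans_lt hx.1, hx.2⟩

theorem separatesPowers_zero : SeparatesPowers f₀ f₁ 0 := by
  have hfix : ∀ l : List ℕ, (∀ i ∈ l, 0 < i) →
      posWord f₀ f₁ l ∈ fixingSubgroup (Perm ℝ) (Ioo a (f₀⁻¹ p)) := fun l hl =>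
    posWord_mem fun i hi => by
      obtain ⟨j, rfl⟩ := Nat.exists_eq_add_of_le' (hl i hi)
      exact H.thompsonGen_succ_mem_fixingSubgroup j
  exact fun P Q m n hP hQ h => H.orbital.eq_of_mul_pow_eq_mul_pow H.inv_apply_mem_Ioo.1
    (H.inv_apply_mem_Ioo.2.trans H.mem_Ioo.2).le (hfix P hP) (hfix Q hQ) h

theorem separatesPowers_one : SeparatesPowers f₀ f₁ 1 := by
  obtain ⟨b, hab, hbp, hb⟩ := H.exists_isPositiveOrbital
  have hfix : ∀ l : List ℕ, (∀ i ∈ l, 1 < i) →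
      posWord f₀ f₁ l ∈ fixingSubgroup (Perm ℝ) (Ioo b p) := fun l hl =>
    fixingSubgroup_antitone (Perm ℝ) ℝ (Ioo_subset_Ioo_left hab) <| posWord_mem fun i hi => by
      obtain ⟨j, rfl⟩ := Nat.exists_eq_add_of_le' (hl i hi)
      exact H.thompsonGen_add_two_mem_fixingSubgroup j
  intro P Q m n hP hQ h
  rw [thompsonGen_one] at h
  exact hb.eq_of_mul_pow_eq_mul_pow hbp H.mem_Ioo.2.le (hfix P hP) (hfix Q hQ) h

end NicePair

theorem nice_pair_generates_F_general (f₀ f₁ : Equiv.Perm ℝ)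
    (h₀ : IsPL0 f₀) (h₁ : IsPL0 f₁) (a c p : ℝ)
    (horb : IsOrbital f₀ a c) (hup : ∀ x ∈ Set.Ioo a c, x < f₀ x)
    (hp : p ∈ Set.Ioo a c)
    (hagree : ∀ x ∈ Set.Icc p c, f₁ x = f₀ x)
    (hid : ∀ x ∈ Set.Ioo a (f₀⁻¹ p), f₁ x = x)
    (hcommout : ∀ x ∉ Set.Ioo a c, f₀ (f₁ x) = f₁ (f₀ x)) :
    ∃ φ : ThompsonF →* Equiv.Perm ℝ, Function.Injective φ ∧
      φ (PresentedGroup.of (0 : Fin 2)) = f₀ ∧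
      φ (PresentedGroup.of (1 : Fin 2)) = f₁ ∧
      φ.range = Subgroup.closure {f₀, f₁} := by
  have H : NicePair f₀ f₁ a c p :=
    ⟨⟨h₀.1, horb.2.2.1, horb.2.2.2, hup⟩, h₁.1, hp, hagree, hid, hcommout⟩
  have hrels := (lift_thompsonRels_eq_one_iff ![f₀, f₁]).2 H.satisfiesThompsonRels
  set φ := PresentedGroup.toGroup hrels
  have hφ₀ : φ (PresentedGroup.of 0) = f₀ := PresentedGroup.toGroup.of hrels
  have hφ₁ : φ (PresentedGroup.of 1) = f₁ := PresentedGroup.toGroup.of hrels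
  refine ⟨φ, ?_, hφ₀, hφ₁, ?_⟩
  · refine satisfiesThompsonRels_of.injective_of_separatesPowers closure_of_zero_one_eq_top φ ?_ ?_
    · simpa only [hφ₀, hφ₁] using H.separatesPowers_zero
    · simpa only [hφ₀, hφ₁] using H.separatesPowers_one
  · rw [MonoidHom.range_eq_map, ← closure_of_zero_one_eq_top, MonoidHom.map_closure,
      Set.image_pair, hφ₀, hφ₁]

/-- Construction of a nice generating pair: let `f₀ ∈ PL₀(I)` be a non-identity
element, `(a,c)` an orbital of `f₀` on which `f₀ x > x`, and `p ∈ (a,c)`.  If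
`f₁ ∈ PL₀(I)` agrees with `f₀` on `[p,c]`, is the identity on `(a, f₀⁻¹(p))`,
commutes with `f₀` outside `(a,c)`, and each of its orbitals meeting an orbital of
`f₀` is contained in it, then `f₀` and `f₁` generate a standard isomorphic copy of
Thompson's group `F` (via `x₀ ↦ f₀`, `x₁ ↦ f₁`). -/
theorem nice_pair_generates_F (f₀ f₁ : Equiv.Perm ℝ)
    (h₀ : IsPL0 f₀) (h₁ : IsPL0 f₁) (hne : f₀ ≠ 1) (a c p : ℝ)
    (horb : IsOrbital f₀ a c) (hup : ∀ x ∈ Set.Ioo a c, x < f₀ x)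
    (hp : p ∈ Set.Ioo a c)
    (hagree : ∀ x ∈ Set.Icc p c, f₁ x = f₀ x)
    (hid : ∀ x ∈ Set.Ioo a (f₀⁻¹ p), f₁ x = x)
    (hcommout : ∀ x ∉ Set.Ioo a c, f₀ (f₁ x) = f₁ (f₀ x))
    (hnest : ∀ a' c' b d : ℝ, IsOrbital f₀ a' c' → IsOrbital f₁ b d →
      (Set.Ioo a' c' ∩ Set.Ioo b d).Nonempty → Set.Ioo b d ⊆ Set.Ioo a' c') :
    ∃ φ : ThompsonF →* Equiv.Perm ℝ, Function.Injective φ ∧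
      φ (PresentedGroup.of (0 : Fin 2)) = f₀ ∧
      φ (PresentedGroup.of (1 : Fin 2)) = f₁ ∧
      φ.range = Subgroup.closure {f₀, f₁} :=
  nice_pair_generates_F_general f₀ f₁ h₀ h₁ a c p horb hup hp hagree hid hcommout
end
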